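/- arXiv:2210.06732 — 5 statements merged into one kernel-verified Lean document; each statement's English description precedes it below -/
import Mathlib

section
/- Let (Ω, P) be a probability space with events A (being accepted after improvement), R (being rejected), and Z (belonging to group z), with P(R ∩ Z) > 0 and P(A ∩ R) > 0 and P(R) > 0 and P(Z) > 0. If P(A | R ∩ Z) = P(A | R) (equal improvability) and P(A ∩ R | Z) = P(A ∩ R) (bounded effort), then P(R | Z) = P(R) (demographic parity on rejection). -/
open MeasureTheory ProbabilityTheory

namespace ProbabilityTheory

variable {Ω : Type*} [MeasurableSpace Ω] {μ : Measure Ω} [IsFiniteMeasure μ] {a s t : Set Ω}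

lemma cond_apply_eq_of_measure_inter_eq_mul (ht : MeasurableSet t) (ht₀ : μ t ≠ 0)
    (h : μ (s ∩ t) = μ s * μ t) : μ[s|t] = μ s := by
  rw [cond_apply ht, Set.inter_comm, h, mul_comm (μ s), ← mul_assoc,
    ENNReal.inv_mul_cancel ht₀ (measure_ne_top μ t), one_mul]

/-- Both hypotheses compute `μ (a ∩ s ∩ t)`: as `μ[a|s] * μ (s ∩ t)` and as
`μ[a|s] * μ s * μ t`; cancelling `μ[a|s]` leaves the independence of `s` and `t`. -/
lemma measure_inter_eq_mul_of_cond_inter_eq_cond (hs : MeasurableSet s)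
    (ht : MeasurableSet t) (has₀ : μ (a ∩ s) ≠ 0) (hcond : μ[a|s ∩ t] = μ[a|s])
    (hindep : μ[a ∩ s|t] = μ (a ∩ s)) :
    μ (s ∩ t) = μ s * μ t := by
  have hcond₀ : μ[a|s] ≠ 0 := (cond_pos_of_inter_ne_zero hs (by rwa [Set.inter_comm])).ne'
  have hcond_top : μ[a|s] ≠ ⊤ := measure_ne_top _ a
  refine (ENNReal.mul_right_inj hcond₀ hcond_top).mp ?_
  calc μ[a|s] * μ (s ∩ t)
        = μ ((s ∩ t) ∩ a) := by rw [← hcond, cond_mul_eq_inter (hs.inter ht)]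
    _ = μ (t ∩ (a ∩ s)) := by congr 1; ac_rfl
    _ = μ (a ∩ s) * μ t := by rw [← cond_mul_eq_inter ht, hindep]
    _ = μ[a|s] * (μ s * μ t) := by rw [← mul_assoc, cond_mul_eq_inter hs, Set.inter_comm]

end ProbabilityTheory

theorem ei_and_be_implies_dp_general {Ω : Type*} [MeasurableSpace Ω] (P : Measure Ω)
    [IsProbabilityMeasure P] (A R Z : Set Ω)
    (hR : MeasurableSet R) (hZ : MeasurableSet Z)
    (hAR : 0 < P (A ∩ R)) (hZpos : 0 < P Z)
    (hEI : (P[|R ∩ Z]) A = (P[|R]) A)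
    (hBE : (P[|Z]) (A ∩ R) = P (A ∩ R)) :
    (P[|Z]) R = P R :=
  cond_apply_eq_of_measure_inter_eq_mul hZ hZpos.ne'
    (measure_inter_eq_mul_of_cond_inter_eq_cond hR hZ hAR.ne' hEI hBE)

/-- EI ∧ BE ⇒ DP (Theorem 1, direction 1). -/
theorem ei_and_be_implies_dp {Ω : Type*} [MeasurableSpace Ω] (P : Measure Ω)
    [IsProbabilityMeasure P] (A R Z : Set Ω)
    (hA : MeasurableSet A) (hR : MeasurableSet R) (hZ : MeasurableSet Z)
    (hRZ : 0 < P (R ∩ Z)) (hAR : 0 < P (A ∩ R)) (hRpos : 0 < P R) (hZpos : 0 < P Z)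
    (hEI : (P[|R ∩ Z]) A = (P[|R]) A)
    (hBE : (P[|Z]) (A ∩ R) = P (A ∩ R)) :
    (P[|Z]) R = P R :=
  ei_and_be_implies_dp_general P A R Z hR hZ hAR hZpos hEI hBE
end

section
/- Let (Ω, P) be a probability space with events A, R, Z such that P(R ∩ Z) > 0, P(R) > 0, P(Z) > 0. If P(A ∩ R | Z) = P(A ∩ R) (bounded effort) and P(R | Z) = P(R) (demographic parity), then P(A | R ∩ Z) = P(A | R) (equal improvability). -/
open MeasureTheory ProbabilityTheory

theorem cond_apply_congr {Ω : Type*} [MeasurableSpace Ω] {μ ν : Measure Ω} {s t : Set Ω}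
    (hs : MeasurableSet s) (h_s : ν s = μ s) (h_st : ν (s ∩ t) = μ (s ∩ t)) :
    ν[t | s] = μ[t | s] := by
  rw [cond_apply hs, cond_apply hs, h_s, h_st]

theorem be_and_dp_implies_ei_general {Ω : Type*} [MeasurableSpace Ω] (P : Measure Ω)
    [IsProbabilityMeasure P] (A R Z : Set Ω)
    (hR : MeasurableSet R) (hZ : MeasurableSet Z)
    (hBE : (P[|Z]) (A ∩ R) = P (A ∩ R))
    (hDP : (P[|Z]) R = P R) :
    (P[|R ∩ Z]) A = (P[|R]) A := by
  calc (P[|R ∩ Z]) A = (P[|Z][|R]) A := by rw [Set.inter_comm, cond_cond_eq_cond_inter hZ hR]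
    _ = (P[|R]) A := cond_apply_congr hR hDP (by rwa [Set.inter_comm])

/-- BE ∧ DP ⇒ EI (Theorem 1, direction 3). -/
theorem be_and_dp_implies_ei {Ω : Type*} [MeasurableSpace Ω] (P : Measure Ω)
    [IsProbabilityMeasure P] (A R Z : Set Ω)
    (hA : MeasurableSet A) (hR : MeasurableSet R) (hZ : MeasurableSet Z)
    (hRZ : 0 < P (R ∩ Z)) (hRpos : 0 < P R) (hZpos : 0 < P Z)
    (hBE : (P[|Z]) (A ∩ R) = P (A ∩ R))
    (hDP : (P[|Z]) R = P R) :
    (P[|R ∩ Z]) A = (P[|R]) A :=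
  be_and_dp_implies_ei_general P A R Z hR hZ hBE hDP
end

section
/- Let (Ω, P) be a probability space with events A, R, Z such that P(R ∩ Z) > 0, P(R) > 0, P(Z) > 0, and P(A ∩ R) > 0. If P(R | Z) ≠ P(R) (demographic parity fails), then it is not the case that both P(A | R ∩ Z) = P(A | R) and P(A ∩ R | Z) = P(A ∩ R) hold; that is, EI and BE cannot hold simultaneously. -/
open MeasureTheory ProbabilityTheory

/-- Corollary 1: if DP fails, EI and BE cannot hold simultaneously. -/
theorem not_dp_implies_not_ei_and_be {Ω : Type*} [MeasurableSpace Ω] (P : Measure Ω)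
    [IsProbabilityMeasure P] (A R Z : Set Ω)
    (hA : MeasurableSet A) (hR : MeasurableSet R) (hZ : MeasurableSet Z)
    (hRZ : 0 < P (R ∩ Z)) (hRpos : 0 < P R) (hZpos : 0 < P Z) (hAR : 0 < P (A ∩ R))
    (hnDP : (P[|Z]) R ≠ P R) :
    ¬ ((P[|R ∩ Z]) A = (P[|R]) A ∧ (P[|Z]) (A ∩ R) = P (A ∩ R)) := by
  rintro ⟨hEI, hBE⟩
  apply hnDP
  rw [cond_apply hZ] at hBE ⊢
  rw [cond_apply (hR.inter hZ)] at hEI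
  rw [cond_apply hR] at hEI
  have hZne : P Z ≠ 0 := hZpos.ne'
  have hZt : P Z ≠ ⊤ := measure_ne_top P Z
  have hRZne : P (R ∩ Z) ≠ 0 := hRZ.ne'
  have hRZt : P (R ∩ Z) ≠ ⊤ := measure_ne_top P (R ∩ Z)
  have hRne : P R ≠ 0 := hRpos.ne'
  have hRt : P R ≠ ⊤ := measure_ne_top P R
  have hARne : P (A ∩ R) ≠ 0 := hAR.ne'
  have hARt : P (A ∩ R) ≠ ⊤ := measure_ne_top P (A ∩ R)
  have e1 : Z ∩ (A ∩ R) = R ∩ Z ∩ A := by ext x; simp [Set.mem_inter_iff]; tauto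
  have e2 : R ∩ A = A ∩ R := Set.inter_comm R A
  have e3 : Z ∩ R = R ∩ Z := Set.inter_comm Z R
  rw [e1] at hBE
  rw [e2] at hEI
  -- from hBE : (P Z)⁻¹ * P (R ∩ Z ∩ A) = P (A ∩ R)
  have hm : P (R ∩ Z ∩ A) = P Z * P (A ∩ R) := by
    have := congrArg (P Z * ·) hBE
    simpa [← mul_assoc, ENNReal.mul_inv_cancel hZne hZt] using this
  rw [hm] at hEI
  -- hEI : (P (R ∩ Z))⁻¹ * (P Z * P (A ∩ R)) = (P R)⁻¹ * P (A ∩ R)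
  have key : (P (R ∩ Z))⁻¹ * P Z = (P R)⁻¹ := by
    have h := congrArg (· * (P (A ∩ R))⁻¹) hEI
    simpa [mul_assoc, ENNReal.mul_inv_cancel hARne hARt] using h
  -- goal : (P Z)⁻¹ * P (R ∩ Z) = P R
  have h : ((P (R ∩ Z))⁻¹ * P Z)⁻¹ = ((P R)⁻¹)⁻¹ := by rw [key]
  rw [ENNReal.mul_inv (Or.inl (ENNReal.inv_ne_zero.mpr hRZt))
    (Or.inl (ENNReal.inv_ne_top.mpr hRZne)), inv_inv, inv_inv] at h
  rw [mul_comm, e3]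
  exact h
end

section
/- The ratio Φ(x)/φ(x) is strictly increasing on ℝ, where Φ and φ are the CDF and PDF of the standard normal distribution. -/
/-! The substitution `t = x + s` and `φ(x + s) / φ(x) = exp (-s ^ 2 / 2 - x * s)` give
`Φ(x) / φ(x) = ∫_{s ≤ 0} exp (-s ^ 2 / 2 - x * s) ds`, and for every `s < 0` this integrand is
strictly increasing in `x`. -/

/-- Standard normal PDF. -/
noncomputable def stdPdf (x : ℝ) : ℝ := Real.exp (-(x ^ 2) / 2) / Real.sqrt (2 * Real.pi)

/-- Standard normal CDF. -/
noncomputable def stdCdf (x : ℝ) : ℝ := ∫ t in Set.Iic x, stdPdf t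

open MeasureTheory Real Set

section ParametricIntegral

variable {α : Type*} [MeasurableSpace α] {μ : Measure α}

theorem integral_lt_integral_of_ae_lt [NeZero μ] {f g : α → ℝ} (hf : Integrable f μ)
    (hg : Integrable g μ) (hlt : ∀ᵐ a ∂μ, f a < g a) : ∫ a, f a ∂μ < ∫ a, g a ∂μ := by
  rw [← sub_pos, ← integral_sub hg hf]
  have hpos : ∀ᵐ a ∂μ, 0 < (g - f) a := hlt.mono fun a ha => sub_pos.2 ha
  refine (integral_nonneg_of_ae (hpos.mono fun a ha => ha.le)).lt_of_ne fun hzero => ?_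
  have hvanish : g - f =ᵐ[μ] 0 :=
    (integral_eq_zero_iff_of_nonneg_ae (hpos.mono fun a ha => ha.le) (hg.sub hf)).1 hzero.symm
  obtain ⟨a, hpos_a, hvanish_a⟩ := (hpos.and hvanish).exists
  exact hpos_a.ne' hvanish_a

theorem strictMono_integral_of_ae_strictMono {β : Type*} [Preorder β] [NeZero μ]
    {F : β → α → ℝ} (hF : ∀ x, Integrable (F x) μ) (hmono : ∀ᵐ a ∂μ, StrictMono (F · a)) :
    StrictMono fun x => ∫ a, F x a ∂μ := fun _ _ hxy =>
  integral_lt_integral_of_ae_lt (hF _) (hF _) (hmono.mono fun _ ha => ha hxy)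

end ParametricIntegral

theorem integrable_exp_neg_sq_div_two_sub_mul (x : ℝ) :
    Integrable fun s : ℝ => exp (-(s ^ 2) / 2 - x * s) := by
  have hgauss : Integrable fun s : ℝ => exp (x ^ 2 / 2) * exp (-(1 / 2) * (s + x) ^ 2) :=
    ((integrable_exp_neg_mul_sq (by norm_num : (0 : ℝ) < 1 / 2)).comp_add_right x).const_mul _
  refine hgauss.congr (Filter.Eventually.of_forall fun s => ?_)
  simp only [← exp_add]
  ring_nf

theorem stdPdf_pos (x : ℝ) : 0 < stdPdf x := by
  unfold stdPdf
  positivity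

theorem stdCdf_div_stdPdf (x : ℝ) :
    stdCdf x / stdPdf x = ∫ s in Iic 0, exp (-(s ^ 2) / 2 - x * s) := by
  have hshift := (measurePreserving_add_right volume x).setIntegral_preimage_emb
    (measurableEmbedding_addRight x) (fun t => stdPdf t / stdPdf x) (Iic x)
  rw [preimage_add_const_Iic, sub_self] at hshift
  rw [stdCdf, ← integral_div, ← hshift]
  refine setIntegral_congr_fun measurableSet_Iic fun s _ => ?_
  rw [div_eq_iff (stdPdf_pos x).ne', stdPdf, stdPdf, ← mul_div_assoc, ← exp_add]
  ring_nf

/-- The ratio Φ(x)/φ(x) is strictly increasing on ℝ. -/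
theorem cdf_div_pdf_strictMono : StrictMono (fun x : ℝ => stdCdf x / stdPdf x) := by
  simp only [stdCdf_div_stdPdf]
  have : NeZero (volume (Iic (0 : ℝ))) := ⟨by simp⟩
  refine strictMono_integral_of_ae_strictMono
    (fun x => (integrable_exp_neg_sq_div_two_sub_mul x).integrableOn) ?_
  rw [Measure.restrict_congr_set Iio_ae_eq_Iic.symm, ae_restrict_iff' measurableSet_Iio]
  refine Filter.Eventually.of_forall fun s (hs : s < 0) x y hxy => exp_lt_exp.2 ?_
  nlinarith
end

section
/- For every δ > 0 and σ > 0 and all x ∈ ℝ: φ((x-δ)/σ)·Φ(x/σ) > Φ((x-δ)/σ)·φ(x/σ), where Φ and φ are the standard normal CDF and PDF. -/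
open MeasureTheory Set

theorem integral_Iic_comp_add_right {E : Type*} [NormedAddCommGroup E] [NormedSpace ℝ E]
    (f : ℝ → E) (a d : ℝ) : ∫ x in Iic a, f (x + d) = ∫ x in Iic (a + d), f x := by
  have h := (measurableEmbedding_addRight d).setIntegral_map (μ := volume) f (Iic (a + d))
  rw [map_add_right_eq_self] at h
  rw [h, preimage_add_const_Iic, add_sub_cancel_right]

theorem setIntegral_Iic_lt_setIntegral_Iic {f g : ℝ → ℝ} {a : ℝ} (hf : IntegrableOn f (Iic a))
    (hg : IntegrableOn g (Iic a)) (hlt : ∀ t < a, f t < g t) :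
    ∫ t in Iic a, f t < ∫ t in Iic a, g t := by
  rw [integral_Iic_eq_integral_Iio, integral_Iic_eq_integral_Iio, ← sub_pos,
    ← integral_sub (hg.mono_set Iio_subset_Iic_self) (hf.mono_set Iio_subset_Iic_self)]
  have hpos : ∀ t ∈ Iio a, 0 < g t - f t := fun t ht => sub_pos.2 (hlt t ht)
  rw [setIntegral_pos_iff_support_of_nonneg_ae
    ((ae_restrict_iff' measurableSet_Iio).2 (.of_forall fun t ht => (hpos t ht).le))
    ((hg.sub hf).mono_set Iio_subset_Iic_self)]
  exact (by simp : (0 : ENNReal) < volume (Iio a)).trans_le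
    (measure_mono fun t ht => ⟨(hpos t ht).ne', ht⟩)

theorem integrable_stdPdf : Integrable stdPdf := by
  refine ((integrable_exp_neg_mul_sq (b := 1 / 2) (by norm_num)).div_const
    (Real.sqrt (2 * Real.pi))).congr (.of_forall fun x => ?_)
  simp only [stdPdf]
  ring_nf

/-- The Gaussian likelihood ratio `φ(t + c) / φ(t) = exp (-c t - c² / 2)` is strictly decreasing
in `t` for `c > 0`. -/
theorem stdPdf_add_mul_stdPdf_lt {a c t : ℝ} (hc : 0 < c) (ht : t < a) :
    stdPdf (a + c) * stdPdf t < stdPdf a * stdPdf (t + c) := by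
  have hs : 0 < Real.sqrt (2 * Real.pi) * Real.sqrt (2 * Real.pi) := by positivity
  simp only [stdPdf, div_mul_div_comm, ← Real.exp_add]
  rw [div_lt_div_iff_of_pos_right hs, Real.exp_lt_exp]
  nlinarith

/-- φ((x-δ)/σ)·Φ(x/σ) > Φ((x-δ)/σ)·φ(x/σ) for δ > 0, σ > 0. -/
theorem pdf_cdf_cross_ineq (δ σ : ℝ) (hδ : 0 < δ) (hσ : 0 < σ) (x : ℝ) :
    stdPdf ((x - δ) / σ) * stdCdf (x / σ) > stdCdf ((x - δ) / σ) * stdPdf (x / σ) := by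
  set a := (x - δ) / σ
  set c := δ / σ
  have hx : x / σ = a + c := by rw [← add_div, sub_add_cancel]
  rw [hx, gt_iff_lt]
  calc stdCdf a * stdPdf (a + c) = ∫ t in Iic a, stdPdf (a + c) * stdPdf t := by
        rw [stdCdf, integral_const_mul, mul_comm]
    _ < ∫ t in Iic a, stdPdf a * stdPdf (t + c) :=
        setIntegral_Iic_lt_setIntegral_Iic (integrable_stdPdf.const_mul _).integrableOn
          ((integrable_stdPdf.comp_add_right c).const_mul _).integrableOn
          fun t ht => stdPdf_add_mul_stdPdf_lt (div_pos hδ hσ) ht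
    _ = stdPdf a * stdCdf (a + c) := by
        rw [integral_const_mul, stdCdf, integral_Iic_comp_add_right stdPdf]
end
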